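/- arXiv:math/0505033 — 2 statements merged into one kernel-verified Lean document; each statement's English description precedes it below -/
import Mathlib

section
/- Let i and n be positive integers with i ≤ n. Let Z₁,…,Zₙ : Ω → ℝ^i be i.i.d. random vectors, each distributed as a vector (Y₁,…,Y_i) with E[∏_{t∈B} |Y_t|] < ∞ for every nonempty subset B ⊆ {1,…,i}. Then the multivariate k-statistic ∑_{π∈Π_i} ((−1)^{|π|−1}(|π|−1)!/(n)_{|π|}) ∑_{f} ∏_{B∈π} ∏_{t∈B} (Z_{f(B)})_t, where the inner sum ranges over all injective functions f from the blocks of π to {1,…,n}, has expectation equal to the joint cumulant κ(Y₁,…,Y_i); that is, it is an unbiased estimator of the joint cumulant. -/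
open Finset MeasureTheory ProbabilityTheory

/-!
For an injective assignment `f` of the blocks of `π` to sample indices, the factors
`∏_{t ∈ B} (Z_{f(B)})_t` come from distinct, hence independent, copies of `Y`, so the expectation
of their product is `∏_{B ∈ π} E[∏_{t ∈ B} Y_t]`, whatever `f` is. There are `(n)_{|π|}`
injective `f`, which cancels the normalisation, and linearity of expectation gives the joint
cumulant.
-/

theorem Fintype.card_filter_injective {α β : Type*} [Fintype α] [Fintype β] [DecidableEq α]
    [DecidableEq β] :
    #(univ.filter (Function.Injective : (α → β) → Prop)) =
      (Fintype.card β).descFactorial (Fintype.card α) := by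
  rw [← Fintype.card_embedding_eq, ← Fintype.card_subtype]
  exact Fintype.card_congr (Equiv.subtypeInjectiveEquivEmbedding α β)

theorem ProbabilityTheory.iIndepFun.integrable_fun_prod {Ω ι 𝕜 : Type*} [MeasurableSpace Ω]
    {μ : Measure Ω} [Fintype ι] [RCLike 𝕜]
    {X : ι → Ω → 𝕜} (hX : iIndepFun X μ) (hint : ∀ i, Integrable (X i) μ) :
    Integrable (fun ω ↦ ∏ i, X i ω) μ := by
  have := hX.isProbabilityMeasure
  have mX : ∀ i, AEMeasurable (X i) μ := fun i ↦ (hint i).aemeasurable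
  have hpi : Integrable (fun x : ι → 𝕜 ↦ ∏ i, x i) (μ.map fun ω i ↦ X i ω) := by
    rw [hX.map_fun_eq_pi_map mX]
    exact .fintype_prod fun i ↦ (integrable_map_measure aestronglyMeasurable_id (mX i)).2 (hint i)
  exact hpi.comp_aemeasurable (aemeasurable_pi_lambda _ mX)

section Blocks

variable {Ω Ω' α κ ι : Type*} [MeasurableSpace Ω] [MeasurableSpace Ω'] {μ : Measure Ω}
  {ν : Measure Ω'}

theorem ProbabilityTheory.IdentDistrib.integrable_prod_apply {W : Ω → α → ℝ} {V : Ω' → α → ℝ}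
    (h : IdentDistrib W V μ ν) (B : Finset α)
    (hV : Integrable (fun ω ↦ ∏ t ∈ B, |V ω t|) ν) :
    Integrable (fun ω ↦ ∏ t ∈ B, W ω t) μ := by
  have habs : Integrable (fun ω ↦ ∏ t ∈ B, |W ω t|) μ :=
    (h.comp (u := fun v : α → ℝ ↦ ∏ t ∈ B, |v t|) (by fun_prop)).integrable_iff.2 hV
  refine habs.mono' ?_ (ae_of_all _ fun ω ↦ by simp)
  exact ((by fun_prop : Measurable fun v : α → ℝ ↦ ∏ t ∈ B, v t).comp_aemeasurable
    h.aemeasurable_fst).aestronglyMeasurable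

variable [Fintype ι] {Z : κ → Ω → α → ℝ} {V : Ω' → α → ℝ} {f : ι → κ} (B : ι → Finset α)

theorem ProbabilityTheory.iIndepFun.integrable_prod_blocks (hZ : iIndepFun Z μ)
    (hident : ∀ l, IdentDistrib (Z l) V μ ν) (hf : f.Injective)
    (hV : ∀ b, Integrable (fun ω ↦ ∏ t ∈ B b, |V ω t|) ν) :
    Integrable (fun ω ↦ ∏ b, ∏ t ∈ B b, Z (f b) ω t) μ :=
  ((hZ.precomp hf).comp (fun b v ↦ ∏ t ∈ B b, v t) fun _ ↦ by fun_prop).integrable_fun_prod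
    fun b ↦ (hident (f b)).integrable_prod_apply (B b) (hV b)

theorem ProbabilityTheory.iIndepFun.integral_prod_blocks (hZ : iIndepFun Z μ)
    (hident : ∀ l, IdentDistrib (Z l) V μ ν) (hf : f.Injective) :
    ∫ ω, ∏ b, ∏ t ∈ B b, Z (f b) ω t ∂μ = ∏ b, ∫ ω, ∏ t ∈ B b, V ω t ∂ν := by
  rw [(hZ.precomp hf).integral_fun_prod_comp (fun b ↦ (hident (f b)).aemeasurable_fst)
    fun b ↦ (by fun_prop : Measurable fun v : α → ℝ ↦ ∏ t ∈ B b, v t).aestronglyMeasurable]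
  exact prod_congr rfl fun b _ ↦
    ((hident (f b)).comp (u := fun v : α → ℝ ↦ ∏ t ∈ B b, v t) (by fun_prop)).integral_eq

variable [Fintype κ] [DecidableEq ι] [DecidableEq κ]

theorem ProbabilityTheory.iIndepFun.integrable_sum_injective_prod_blocks (hZ : iIndepFun Z μ)
    (hident : ∀ l, IdentDistrib (Z l) V μ ν)
    (hV : ∀ b, Integrable (fun ω ↦ ∏ t ∈ B b, |V ω t|) ν) :
    Integrable (fun ω ↦ ∑ f ∈ univ.filter Function.Injective, ∏ b, ∏ t ∈ B b, Z (f b) ω t) μ :=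
  integrable_finsetSum _ fun _ hf ↦ hZ.integrable_prod_blocks B hident (mem_filter.1 hf).2 hV

theorem ProbabilityTheory.iIndepFun.integral_sum_injective_prod_blocks (hZ : iIndepFun Z μ)
    (hident : ∀ l, IdentDistrib (Z l) V μ ν)
    (hV : ∀ b, Integrable (fun ω ↦ ∏ t ∈ B b, |V ω t|) ν) :
    ∫ ω, ∑ f ∈ univ.filter Function.Injective, ∏ b, ∏ t ∈ B b, Z (f b) ω t ∂μ =
      (Fintype.card κ).descFactorial (Fintype.card ι) * ∏ b, ∫ ω, ∏ t ∈ B b, V ω t ∂ν := by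
  rw [integral_finsetSum _ fun _ hf ↦ hZ.integrable_prod_blocks B hident (mem_filter.1 hf).2 hV,
    sum_congr rfl fun _ hf ↦ hZ.integral_prod_blocks B hident (mem_filter.1 hf).2, sum_const,
    Fintype.card_filter_injective, nsmul_eq_mul]

end Blocks

theorem multivariate_kstatistic_unbiased_for_joint_cumulant_general
    {Ω : Type*} [MeasurableSpace Ω] (μ : Measure Ω)
    (i n : ℕ) (hin : i ≤ n)
    (Z : Fin n → Ω → (Fin i → ℝ))
    (hindep : iIndepFun Z μ)
    (Y : Fin i → Ω → ℝ)
    (hident : ∀ l, IdentDistrib (Z l) (fun ω t => Y t ω) μ μ)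
    (hint : ∀ B : Finset (Fin i), B.Nonempty →
      Integrable (fun ω => ∏ t ∈ B, |Y t ω|) μ) :
    ∫ ω, (∑ π : Finpartition (univ : Finset (Fin i)),
        ((-1 : ℝ) ^ (π.parts.card - 1) * ((π.parts.card - 1).factorial : ℝ) /
            (n.descFactorial π.parts.card : ℝ)) *
          ∑ f ∈ (univ : Finset ({B // B ∈ π.parts} → Fin n)).filter Function.Injective,
            ∏ B : {B // B ∈ π.parts}, ∏ t ∈ B.val, Z (f B) ω t) ∂μ
      = ∑ π : Finpartition (univ : Finset (Fin i)),
          (-1 : ℝ) ^ (π.parts.card - 1) * ((π.parts.card - 1).factorial : ℝ) *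
            ∏ B ∈ π.parts, ∫ ω, ∏ t ∈ B, Y t ω ∂μ := by
  have hblock (π : Finpartition (univ : Finset (Fin i))) (B : {B // B ∈ π.parts}) :
      Integrable (fun ω ↦ ∏ t ∈ B.val, |Y t ω|) μ :=
    hint B (π.nonempty_of_mem_parts B.2)
  rw [integral_finsetSum _ fun π _ ↦
    (hindep.integrable_sum_injective_prod_blocks _ hident (hblock π)).const_mul _]
  refine sum_congr rfl fun π _ ↦ ?_
  have hcard : π.parts.card ≤ n := π.card_parts_le_card.trans (by simpa using hin)
  have hdesc : (n.descFactorial π.parts.card : ℝ) ≠ 0 :=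
    Nat.cast_ne_zero.2 (Nat.descFactorial_eq_zero_iff_lt.not.2 hcard.not_gt)
  rw [integral_const_mul, hindep.integral_sum_injective_prod_blocks _ hident (hblock π),
    Fintype.card_fin, Fintype.card_coe, prod_coe_sort π.parts fun B ↦ ∫ ω, ∏ t ∈ B, Y t ω ∂μ]
  field_simp

/-- Let `Z₁,…,Zₙ : Ω → ℝ^i` be i.i.d. random vectors, each distributed as
`(Y₁,…,Y_i)` with `E[∏_{t ∈ B} |Y_t|] < ∞` for all nonempty `B ⊆ {1,…,i}`. Then the
multivariate `k`-statistic
`∑_{π ∈ Π_i} ((−1)^{|π|−1}(|π|−1)!/(n)_{|π|}) ∑_{f} ∏_{B ∈ π} ∏_{t ∈ B} (Z_{f(B)})_t`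
(with `f` injective from the blocks of `π` to `{1,…,n}`) is an unbiased estimator of the
joint cumulant `κ(Y₁,…,Y_i) = ∑_{π ∈ Π_i} (−1)^{|π|−1}(|π|−1)! ∏_{B ∈ π} E[∏_{t ∈ B} Y_t]`. -/
theorem multivariate_kstatistic_unbiased_for_joint_cumulant
    {Ω : Type*} [MeasurableSpace Ω] (μ : Measure Ω) [IsProbabilityMeasure μ]
    (i n : ℕ) (hi : 0 < i) (hin : i ≤ n) (hn : 0 < n)
    (Z : Fin n → Ω → (Fin i → ℝ)) (hmeasZ : ∀ l, Measurable (Z l))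
    (hindep : iIndepFun Z μ)
    (Y : Fin i → Ω → ℝ) (hmeasY : ∀ t, Measurable (Y t))
    (hident : ∀ l, IdentDistrib (Z l) (fun ω t => Y t ω) μ μ)
    (hint : ∀ B : Finset (Fin i), B.Nonempty →
      Integrable (fun ω => ∏ t ∈ B, |Y t ω|) μ) :
    ∫ ω, (∑ π : Finpartition (univ : Finset (Fin i)),
        ((-1 : ℝ) ^ (π.parts.card - 1) * ((π.parts.card - 1).factorial : ℝ) /
            (n.descFactorial π.parts.card : ℝ)) *
          ∑ f ∈ (univ : Finset ({B // B ∈ π.parts} → Fin n)).filter Function.Injective,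
            ∏ B : {B // B ∈ π.parts}, ∏ t ∈ B.val, Z (f B) ω t) ∂μ
      = ∑ π : Finpartition (univ : Finset (Fin i)),
          (-1 : ℝ) ^ (π.parts.card - 1) * ((π.parts.card - 1).factorial : ℝ) *
            ∏ B ∈ π.parts, ∫ ω, ∏ t ∈ B, Y t ω ∂μ :=
  multivariate_kstatistic_unbiased_for_joint_cumulant_general μ i n hin Z hindep Y hident hint
end

section
/- Let R be a commutative ring, n and i positive integers, x₁,…,xₙ ∈ R, and n₁,…,n_i positive integers. Then ∏_{t=1}^{i} s_{n_t}(x₁,…,xₙ) = ∑_{π∈Π_i} ∑_{f} ∏_{B∈π} x_{f(B)}^{m_B}, where m_B = ∑_{t∈B} n_t and the inner sum ranges over all injective functions f from the blocks of π to {1,…,n}. This expresses products of power sum symmetric polynomials in terms of augmented monomial symmetric polynomials. -/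
/-!
Expanding the product gives `∑_{g : Fin i → Fin n} ∏_t x_{g t}^{n_t}`. Sort the maps `g` by
the partition of `Fin i` into the fibres of `g`: the maps whose fibres form a given partition `π`
are exactly `f ∘ (block of ·)` for `f` injective on the blocks of `π`, and for such a map the
product over `t` regroups block by block into `∏_B x_{f B}^{m_B}`.
-/

open Finset

namespace Finpartition

variable {α : Type*} [DecidableEq α]

theorem prod_prod_parts {s : Finset α} (P : Finpartition s) {M : Type*} [CommMonoid M]
    (f : α → M) : ∏ B ∈ P.parts, ∏ a ∈ B, f a = ∏ a ∈ s, f a := by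
  have h := prod_biUnion (f := f) P.supIndep.pairwiseDisjoint
  rwa [P.biUnion_parts, eq_comm] at h

theorem parts_eq_image_part {s : Finset α} (P : Finpartition s) : P.parts = s.image P.part := by
  ext B
  refine ⟨fun hB => ?_, fun hB => ?_⟩
  · obtain ⟨a, ha, rfl⟩ := P.part_surjOn hB
    exact mem_image_of_mem _ ha
  · obtain ⟨a, ha, rfl⟩ := mem_image.1 hB
    exact P.part_mem.2 ha

theorem ext_part {s : Finset α} {P Q : Finpartition s} (h : ∀ a ∈ s, P.part a = Q.part a) :
    P = Q := by
  ext1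
  rw [P.parts_eq_image_part, Q.parts_eq_image_part]
  exact image_congr h

variable [Fintype α] (P : Finpartition (univ : Finset α))

def toParts (a : α) : P.parts :=
  ⟨P.part a, P.part_mem.2 (mem_univ a)⟩

theorem toParts_eq_toParts_iff {a b : α} : P.toParts a = P.toParts b ↔ b ∈ P.part a := by
  rw [toParts, toParts, Subtype.mk.injEq, eq_comm,
    P.mem_part_iff_part_eq_part (mem_univ b) (mem_univ a)]

theorem toParts_eq_of_mem {B : P.parts} {a : α} (ha : a ∈ B.1) : P.toParts a = B :=
  Subtype.ext (P.part_eq_of_mem B.2 ha)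

theorem toParts_surjective : Function.Surjective P.toParts := fun B =>
  let ⟨a, ha⟩ := P.nonempty_of_mem_parts B.2
  ⟨a, P.toParts_eq_of_mem ha⟩

theorem prod_toParts {M : Type*} [CommMonoid M] (F : P.parts → α → M) :
    ∏ a, F (P.toParts a) a = ∏ B : P.parts, ∏ a ∈ B.1, F B a := by
  rw [← P.prod_prod_parts, ← prod_attach P.parts, univ_eq_attach]
  exact prod_congr rfl fun B _ => prod_congr rfl fun a ha => by rw [P.toParts_eq_of_mem ha]

variable {β : Type*} [DecidableEq β]

def ker (g : α → β) : Finpartition (univ : Finset α) :=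
  ofSetoid (Setoid.ker g)

theorem mem_part_ker {g : α → β} {a b : α} : b ∈ (ker g).part a ↔ g a = g b :=
  mem_part_ofSetoid_iff_rel

theorem ker_eq_iff {g : α → β} : ker g = P ↔ ∀ a b, b ∈ P.part a ↔ g a = g b := by
  refine ⟨fun h a b => h ▸ mem_part_ker, fun h => ext_part fun a _ => ?_⟩
  ext b
  rw [mem_part_ker, h]

theorem ker_comp_toParts_eq_iff {f : P.parts → β} :
    ker (f ∘ P.toParts) = P ↔ f.Injective := by
  rw [ker_eq_iff]
  refine ⟨fun h B C hBC => ?_, fun hf a b => ?_⟩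
  · obtain ⟨a, rfl⟩ := P.toParts_surjective B
    obtain ⟨b, rfl⟩ := P.toParts_surjective C
    exact P.toParts_eq_toParts_iff.2 ((h a b).2 hBC)
  · rw [← P.toParts_eq_toParts_iff, Function.comp_apply, Function.comp_apply, hf.eq_iff]

theorem exists_eq_comp_toParts {g : α → β} (hg : ker g = P) :
    ∃ f : P.parts → β, g = f ∘ P.toParts :=
  ⟨g ∘ Function.surjInv P.toParts_surjective, funext fun a =>
    ((P.ker_eq_iff.1 hg _ _).1 <| P.toParts_eq_toParts_iff.1 <|
      Function.surjInv_eq P.toParts_surjective (P.toParts a)).symm⟩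

theorem sum_ker_eq [Fintype β] {M : Type*} [AddCommMonoid M] (F : (α → β) → M) :
    ∑ g with ker g = P, F g = ∑ f : P.parts → β with f.Injective, F (f ∘ P.toParts) := by
  refine (sum_nbij (· ∘ P.toParts) (fun f hf => ?_) ?_ (fun g hg => ?_) fun _ _ => rfl).symm
  · simpa only [mem_filter, mem_univ, true_and, P.ker_comp_toParts_eq_iff] using hf
  · exact fun f _ f' _ h => P.toParts_surjective.injective_comp_right h
  · simp only [coe_filter, mem_univ, true_and, Set.mem_ofPred_eq] at hg ⊢
    obtain ⟨f, rfl⟩ := P.exists_eq_comp_toParts hg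
    exact ⟨f, P.ker_comp_toParts_eq_iff.1 hg, rfl⟩

end Finpartition

theorem power_sum_products_in_terms_of_augmented_monomials_general
    (R : Type*) [CommRing R] (n i : ℕ)
    (x : Fin n → R) (nn : Fin i → ℕ) :
    ∏ t : Fin i, (∑ l : Fin n, x l ^ nn t)
      = ∑ π : Finpartition (univ : Finset (Fin i)),
          ∑ f ∈ (univ : Finset ({B // B ∈ π.parts} → Fin n)).filter Function.Injective,
            ∏ B : {B // B ∈ π.parts}, x (f B) ^ (∑ t ∈ B.val, nn t) := by
  calc ∏ t : Fin i, (∑ l : Fin n, x l ^ nn t)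
      = ∑ g : Fin i → Fin n, ∏ t, x (g t) ^ nn t := Fintype.prod_sum fun t l => x l ^ nn t
    _ = ∑ π, ∑ g with Finpartition.ker g = π, ∏ t, x (g t) ^ nn t :=
        (sum_fiberwise _ _ _).symm
    _ = _ := sum_congr rfl fun π _ => by
        rw [π.sum_ker_eq]
        refine sum_congr rfl fun f _ => ?_
        simp only [Function.comp_apply, π.prod_toParts fun B t => x (f B) ^ nn t,
          prod_pow_eq_pow_sum]

/-- For `x₁,…,xₙ ∈ R` and positive integers `n₁,…,n_i`,
`∏_{t=1}^i s_{n_t}(x) = ∑_{π ∈ Π_i} ∑_{f} ∏_{B ∈ π} x_{f(B)}^{m_B}`, with `m_B = ∑_{t ∈ B} n_t`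
and `f` ranging over injective functions from the blocks of `π` to `{1,…,n}`:
products of power sums in terms of augmented monomial symmetric polynomials. -/
theorem power_sum_products_in_terms_of_augmented_monomials
    (R : Type*) [CommRing R] (n i : ℕ) (hn : 0 < n) (hi : 0 < i)
    (x : Fin n → R) (nn : Fin i → ℕ) (hnn : ∀ t, 0 < nn t) :
    ∏ t : Fin i, (∑ l : Fin n, x l ^ nn t)
      = ∑ π : Finpartition (univ : Finset (Fin i)),
          ∑ f ∈ (univ : Finset ({B // B ∈ π.parts} → Fin n)).filter Function.Injective,
            ∏ B : {B // B ∈ π.parts}, x (f B) ^ (∑ t ∈ B.val, nn t) :=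
  power_sum_products_in_terms_of_augmented_monomials_general R n i x nn
end
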